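/- arXiv:1109.4345 — 2 statements merged into one kernel-verified Lean document; each statement's English description precedes it below -/
import Mathlib

section
/- If (1−H/2)/(3−2H) < β < 1/2, then for each q > 0 there is a constant C > 0 (depending on a, T, H, q) such that P( sup_{0≤s≤T} s^{1−H/2} | ∫_{−ε_n}^{0} [f_s(x) − f_s(x−ε_n)] dB₂(x) | > C α_n ) = o(n^{−q}) as n → ∞, the integral being a Wiener integral. -/
/- Formalization of results from "A strong convergence to the Rosenblatt process"
by J. Garzón, S. Torres and C.A. Tudor.

Conventions used throughout:
* Brownian motions are encoded by the predicates `IsTwoSidedBM` / `IsBM` below.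
* Wiener integrals of `C¹` deterministic integrands and pathwise Riemann–Stieltjes
  integrals against the (piecewise linear) transport processes are both encoded via
  the integration-by-parts formula (`rsInt`), with which they coincide (a.s. in the
  Wiener case).
* Double Wiener–Itô integrals (the processes `X^{2,H}`, `X^{3,H}` and the Rosenblatt
  process itself) are characterized as `L²(P)`-limits of their natural
  `ε`-regularizations, in which the singular kernel `(s-x)^{H/2-1}` is replaced by
  `(s+ε-x)^{H/2-1}` and the diagonal trace term is subtracted. -/

open MeasureTheory ProbabilityTheory Real Filter Set Asymptotics
open scoped ENNReal NNReal

noncomputable section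

variable {Ω : Type*} [MeasurableSpace Ω]

/-- A two-sided standard Brownian motion indexed by `ℝ` on the probability space
`(Ω, P)`: it vanishes at `0`, has a.s. continuous paths, Gaussian increments
`B t - B s ~ N(0, t-s)` for `s ≤ t`, and independent increments. -/
def IsTwoSidedBM (P : Measure Ω) (B : ℝ → Ω → ℝ) : Prop :=
  (∀ t, Measurable (B t)) ∧
  (∀ᵐ ω ∂P, B 0 ω = 0) ∧
  (∀ᵐ ω ∂P, Continuous fun t => B t ω) ∧
  (∀ s t : ℝ, s ≤ t →
    P.map (fun ω => B t ω - B s ω) = gaussianReal 0 (Real.toNNReal (t - s))) ∧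
  (∀ (n : ℕ) (u : Fin (n + 1) → ℝ), Monotone u →
    iIndepFun (m := fun _ => Real.measurableSpace)
      (fun i : Fin n => fun ω => B (u i.succ) ω - B (u i.castSucc) ω) P)

/-- A standard Brownian motion on `[0, ∞)` on the probability space `(Ω, P)`. -/
def IsBM (P : Measure Ω) (B : ℝ → Ω → ℝ) : Prop :=
  (∀ t, Measurable (B t)) ∧
  (∀ᵐ ω ∂P, B 0 ω = 0) ∧
  (∀ᵐ ω ∂P, ContinuousOn (fun t => B t ω) (Ici 0)) ∧
  (∀ s t : ℝ, 0 ≤ s → s ≤ t →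
    P.map (fun ω => B t ω - B s ω) = gaussianReal 0 (Real.toNNReal (t - s))) ∧
  (∀ (n : ℕ) (u : Fin (n + 1) → ℝ), Monotone u → 0 ≤ u 0 →
    iIndepFun (m := fun _ => Real.measurableSpace)
      (fun i : Fin n => fun ω => B (u i.succ) ω - B (u i.castSucc) ω) P)

/-- `Z` is a uniform transport process of parameter `n`: starting from `0` it moves with
velocity `±n` (the initial sign `V` being uniform on `{-1, 1}`), and it reverses its
velocity at the partial sums of an i.i.d. sequence `ξ` of exponential waiting times of
parameter `n²`, with `V` and the `ξ k` all independent. -/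
def IsUniformTransport (P : Measure Ω) (n : ℕ) (Z : ℝ → Ω → ℝ) : Prop :=
  ∃ (V : Ω → ℝ) (ξ : ℕ → Ω → ℝ),
    Measurable V ∧ (∀ k, Measurable (ξ k)) ∧
    P.map V = (1 / 2 : ℝ≥0∞) • Measure.dirac (1 : ℝ) +
      (1 / 2 : ℝ≥0∞) • Measure.dirac (-1 : ℝ) ∧
    (∀ k, P.map (ξ k) = expMeasure ((n : ℝ) ^ 2)) ∧
    iIndepFun (m := fun _ => Real.measurableSpace)
      (fun i : Option ℕ => Option.elim i V ξ) P ∧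
    ∀ ω, ∀ t : ℝ, Z t ω =
      ∫ s in (0 : ℝ)..t, (n : ℝ) * V ω *
        (-1 : ℝ) ^ (Set.ncard {k : ℕ | ∑ j ∈ Finset.range (k + 1), ξ j ω ≤ s})

/-- The sequence `ε_n = n^{-β/(1-H/2)}`. -/
def epsSeq (H β : ℝ) (n : ℕ) : ℝ := (n : ℝ) ^ (-(β / (1 - H / 2)))

/-- The rate `α_n = n^{-(1/2-β)} (log n)^{5/2}`. -/
def alphaRate (β : ℝ) (n : ℕ) : ℝ :=
  (n : ℝ) ^ (-(1 / 2 - β)) * Real.log n ^ ((5 : ℝ) / 2)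

/-- The rate `n^{-(1/2-β-γ)} (log n)^{5/2}`. -/
def alphaRate2 (β γ : ℝ) (n : ℕ) : ℝ :=
  (n : ℝ) ^ (-(1 / 2 - β - γ)) * Real.log n ^ ((5 : ℝ) / 2)

/-- The kernel `f_s(x) = (s-x)^{H/2-1}`. -/
def kf (H s x : ℝ) : ℝ := (s - x) ^ (H / 2 - 1)

/-- Its derivative in `x`: `∂_x f_s(x) = (1-H/2)(s-x)^{H/2-2}`. -/
def kdf (H s x : ℝ) : ℝ := (1 - H / 2) * (s - x) ^ (H / 2 - 2)

/-- Pathwise Riemann–Stieltjes integral `∫_c^d g dZ` of a `C¹` integrand `g`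
(with derivative `dg`) against a path `Z`, encoded through the
integration-by-parts formula; for such integrands this coincides with the pathwise
Riemann–Stieltjes integral when `Z` is continuous of bounded variation, and a.s. with
the Wiener integral when `Z` is a Brownian path. -/
def rsInt (g dg Z : ℝ → ℝ) (c d : ℝ) : ℝ :=
  g d * Z d - g c * Z c - ∫ x in c..d, dg x * Z x

/-- Pathwise version (via integration by parts, using `B 0 = 0` a.s. and the decay
of `f` and of `B` at `-∞`) of the Wiener integral
`Y^{1,H}_s = ∫_{-∞}^0 (s-x)^{H/2-1} dB(x)`. -/
def Y1 (H : ℝ) (B : ℝ → Ω → ℝ) (s : ℝ) (ω : Ω) : ℝ :=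
  kf H s 0 * B 0 ω - ∫ x in Iic (0 : ℝ), kdf H s x * B x ω

/-- The time-inverted Brownian motion `B₃(u) = u B(1/u)` (with `B₃(0) = 0`,
automatic here since `1/0 = 0` and the prefactor vanishes). -/
def B3 (B : ℝ → Ω → ℝ) (u : ℝ) (ω : Ω) : ℝ := u * B (1 / u) ω

/-- The approximating process `Y^{1,H,n}` built from the transport processes `Z₂, Z₃`. -/
def Y1n (H β a : ℝ) (Z₂ Z₃ : ℝ → Ω → ℝ) (n : ℕ) (s : ℝ) (ω : Ω) : ℝ :=
  kf H s a * Z₂ a ω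
  - ∫ u in (1 / a)..(-(epsSeq H β n)), kdf H s (1 / u) * (u ^ 3)⁻¹ * Z₃ u ω
  + rsInt (kf H s) (kdf H s) (fun x => Z₂ x ω) a (-(epsSeq H β n))
  + rsInt (fun x => kf H s (x - epsSeq H β n)) (fun x => kdf H s (x - epsSeq H β n))
      (fun x => Z₂ x ω) (-(epsSeq H β n)) 0

/-- Pathwise version of `∫_0^s (s+ε-x)^{H/2-1} dW(x)` (integration by parts); used
both for `Y^{3,H}` (with `W` a Brownian motion, Wiener integral) and for `Y^{3,H,n}`
(with `W` a transport process, pathwise Riemann–Stieltjes integral). -/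
def Y3e (H ε : ℝ) (W : ℝ → Ω → ℝ) (s : ℝ) (ω : Ω) : ℝ :=
  rsInt (fun x => (s + ε - x) ^ (H / 2 - 1))
    (fun x => (1 - H / 2) * (s + ε - x) ^ (H / 2 - 2)) (fun x => W x ω) 0 s

/-- The strong approximation rate hypothesis (eq. (3.2) of the paper): for each
`q > 0`, `P( sup_{t ∈ [c,d]} |X t - Z^{(n)} t| > C n^{-1/2} (log n)^{5/2} ) = o(n^{-q})`
as `n → ∞`, for some constant `C > 0`. -/
def ApproxRate (P : Measure Ω) (X : ℝ → Ω → ℝ) (Z : ℕ → ℝ → Ω → ℝ) (c d : ℝ) : Prop :=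
  ∀ q : ℝ, 0 < q → ∃ C : ℝ, 0 < C ∧
    (fun n : ℕ =>
      (P {ω | C * (n : ℝ) ^ (-(1 : ℝ) / 2) * Real.log n ^ ((5 : ℝ) / 2) <
        ⨆ t ∈ Icc c d, |X t ω - Z n t ω|}).toReal)
    =o[atTop] fun n : ℕ => (n : ℝ) ^ (-q)

/-- `X^{1,H}_t = c(H) ∫_0^t (Y^{1,H}_s)² ds`. -/
def X1 (H cH : ℝ) (B : ℝ → Ω → ℝ) (t : ℝ) (ω : Ω) : ℝ :=
  cH * ∫ s in (0 : ℝ)..t, (Y1 H B s ω) ^ 2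

/-- `X^{1,H,n}_t = c(H) ∫_0^t (Y^{1,H,n}_s)² ds`. -/
def X1n (H β a cH : ℝ) (Z₂ Z₃ : ℝ → Ω → ℝ) (n : ℕ) (t : ℝ) (ω : Ω) : ℝ :=
  cH * ∫ s in (0 : ℝ)..t, (Y1n H β a Z₂ Z₃ n s ω) ^ 2

/-- `X^{3,H,n}_t = c(H) ∫_0^t (Y^{3,H,n}_s)² ds`. -/
def X3n (H β cH : ℝ) (Z₁ : ℝ → Ω → ℝ) (n : ℕ) (t : ℝ) (ω : Ω) : ℝ :=
  cH * ∫ s in (0 : ℝ)..t, (Y3e H (epsSeq H β n) Z₁ s ω) ^ 2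

/-- `X^{2,H,n}_t = c(H) ∫_0^t Y^{1,H,n}_s Y^{3,H,n}_s ds`. -/
def X2n (H β a cH : ℝ) (Z₁ Z₂ Z₃ : ℝ → Ω → ℝ) (n : ℕ) (t : ℝ) (ω : Ω) : ℝ :=
  cH * ∫ s in (0 : ℝ)..t, Y1n H β a Z₂ Z₃ n s ω * Y3e H (epsSeq H β n) Z₁ s ω

/-- Pathwise version of the regularized Wiener integral
`Y^ε_s = ∫_{-∞}^s (s+ε-x)^{H/2-1} dB(x)` (integration by parts). -/
def Yfull (H ε : ℝ) (B : ℝ → Ω → ℝ) (s : ℝ) (ω : Ω) : ℝ :=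
  ε ^ (H / 2 - 1) * B s ω - ∫ x in Iic s, (1 - H / 2) * (s + ε - x) ^ (H / 2 - 2) * B x ω

/-- `X` is (a version of) the double Wiener–Itô integral
`X^{3,H}_t = c(H) ∫_0^t∫_0^t (∫_{x₁∨x₂}^t (s-x₁)^{H/2-1}(s-x₂)^{H/2-1} ds) dB(x₁)dB(x₂)`,
characterized as the `L²(P)`-limit, as `ε → 0⁺`, of its regularizations
`c(H) ∫_0^t [ (Y^{3,ε}_s)² - ∫_0^s (s+ε-x)^{H-2} dx ] ds`, where
`Y^{3,ε}_s = ∫_0^s (s+ε-x)^{H/2-1} dB(x)` and the subtracted term is the diagonal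
trace `E[(Y^{3,ε}_s)²]`. -/
def IsX3 (P : Measure Ω) (H cH : ℝ) (B X : ℝ → Ω → ℝ) : Prop :=
  ∀ t : ℝ, 0 ≤ t → Tendsto (fun ε : ℝ =>
      ∫ ω, (cH * (∫ s in (0 : ℝ)..t,
        ((Y3e H ε B s ω) ^ 2 - ∫ x in (0 : ℝ)..s, (s + ε - x) ^ (H - 2))) - X t ω) ^ 2 ∂P)
    (nhdsWithin 0 (Ioi 0)) (nhds 0)

/-- `X` is (a version of) the double Wiener–Itô integral
`X^{2,H}_t = c(H) ∫_{-∞}^0 ∫_0^t (∫_{x₂}^t (s-x₁)^{H/2-1}(s-x₂)^{H/2-1} ds) dB(x₂)dB(x₁)`,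
characterized as the `L²(P)`-limit, as `ε → 0⁺`, of
`c(H) ∫_0^t Y^{1,H}_s Y^{3,ε}_s ds` (no trace term appears here, the two Wiener
integrals involving increments of `B` on disjoint intervals). -/
def IsX2 (P : Measure Ω) (H cH : ℝ) (B X : ℝ → Ω → ℝ) : Prop :=
  ∀ t : ℝ, 0 ≤ t → Tendsto (fun ε : ℝ =>
      ∫ ω, (cH * (∫ s in (0 : ℝ)..t, Y1 H B s ω * Y3e H ε B s ω) - X t ω) ^ 2 ∂P)
    (nhdsWithin 0 (Ioi 0)) (nhds 0)

/-- `X` is (a version of) the Rosenblatt process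
`X^H_t = c(H) ∫_ℝ∫_ℝ (∫_0^t (s-x₁)₊^{H/2-1}(s-x₂)₊^{H/2-1} ds) dB(x₁)dB(x₂)`,
characterized as the `L²(P)`-limit, as `ε → 0⁺`, of its regularizations
`c(H) ∫_0^t [ (Y^ε_s)² - ε^{H-1}/(1-H) ] ds`, where
`Y^ε_s = ∫_{-∞}^s (s+ε-x)^{H/2-1} dB(x)` and `ε^{H-1}/(1-H) = E[(Y^ε_s)²]` is the
diagonal trace term. -/
def IsRosenblatt (P : Measure Ω) (H cH : ℝ) (B X : ℝ → Ω → ℝ) : Prop :=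
  ∀ t : ℝ, 0 ≤ t → Tendsto (fun ε : ℝ =>
      ∫ ω, (cH * (∫ s in (0 : ℝ)..t,
        ((Yfull H ε B s ω) ^ 2 - ε ^ (H - 1) / (1 - H))) - X t ω) ^ 2 ∂P)
    (nhdsWithin 0 (Ioi 0)) (nhds 0)

/-!
Pathwise, the kernel `g(x) = f_s(x) - f_s(x - ε)` is nonnegative and increasing on `[-ε, 0]`, so
integrating by parts against a path vanishing at `0` gives `|∫_{-ε}^0 g dB| ≤ g(0) sup_{[-ε,0]} |B|
≤ s^{H/2-1} sup_{[-ε,0]} |B|`: the weighted supremum over `s` is at most `sup_{[-ε,0]} |B|`.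
Ottaviani's maximal inequality on finite grids, continuity of the measure along the rationals and
the Gaussian tail of the increments give `P(sup_{[-ε,0]} |B| > α) ≤ 4 exp(-α² / (32 ε))`.
Finally `α_n² / ε_n = n^δ (log n)^5` with `δ = β / (1 - H/2) - (1 - 2β)`, which the lower bound
on `β` makes positive, so the probability decays faster than any power of `n`.
-/

theorem hasSubgaussianMGF_of_map_eq_gaussianReal {P : Measure Ω} {X : Ω → ℝ}
    (hX : AEMeasurable X P) {v c : ℝ≥0} (hXv : P.map X = gaussianReal 0 v) (hvc : v ≤ c) :
    HasSubgaussianMGF X c P where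
  integrable_exp_mul t := by
    have := integrable_exp_mul_gaussianReal (μ := 0) (v := v) t
    rwa [← hXv, integrable_map_measure (by fun_prop) hX] at this
  mgf_le t := by
    rw [mgf_gaussianReal hXv, zero_mul, zero_add]
    gcongr

theorem ProbabilityTheory.HasSubgaussianMGF.measureReal_abs_ge_le {μ : Measure Ω}
    [IsFiniteMeasure μ] {X : Ω → ℝ} {c : ℝ≥0} (h : HasSubgaussianMGF X c μ) {l : ℝ} (hl : 0 ≤ l) :
    μ.real {ω | l ≤ |X ω|} ≤ 2 * exp (-l ^ 2 / (2 * c)) := by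
  have hsub : {ω | l ≤ |X ω|} ⊆ {ω | l ≤ X ω} ∪ {ω | l ≤ (-X) ω} := fun ω hω ↦ by
    rcases le_abs'.1 (show l ≤ |X ω| from hω) with h | h
    · exact Or.inr (by show l ≤ -X ω; linarith)
    · exact Or.inl h
  calc μ.real {ω | l ≤ |X ω|}
      ≤ μ.real {ω | l ≤ X ω} + μ.real {ω | l ≤ (-X) ω} :=
        (measureReal_mono hsub).trans (measureReal_union_le _ _)
    _ ≤ 2 * exp (-l ^ 2 / (2 * c)) := by
        linarith [h.measure_ge_le hl, h.neg.measure_ge_le hl]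

def firstExceed {α : Type*} (Z : ℕ → α → ℝ) (c : ℝ) (k : ℕ) : Set α :=
  {ω | c ≤ |Z k ω| ∧ ∀ j < k, |Z j ω| < c}

section FirstExceed

variable {α : Type*} {Z : ℕ → α → ℝ} {c : ℝ}

theorem pairwise_disjoint_firstExceed : Pairwise (Function.onFun Disjoint (firstExceed Z c)) := by
  intro j k hjk
  refine Set.disjoint_left.2 fun ω hj hk ↦ ?_
  rcases lt_or_gt_of_ne hjk with h | h
  · exact (hk.2 j h).not_ge hj.1
  · exact (hj.2 k h).not_ge hk.1

theorem biUnion_firstExceed (N : ℕ) :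
    ⋃ k ∈ Finset.Iic N, firstExceed Z c k = {ω | ∃ k ≤ N, c ≤ |Z k ω|} := by
  ext ω
  simp only [mem_iUnion, Finset.mem_Iic, exists_prop]
  constructor
  · rintro ⟨k, hk, hω⟩
    exact ⟨k, hk, hω.1⟩
  · rintro (h : ∃ k ≤ N, c ≤ |Z k ω|)
    refine ⟨Nat.find h, (Nat.find_spec h).1, (Nat.find_spec h).2, fun j hj ↦ ?_⟩
    by_contra! hjc
    exact Nat.find_min h hj ⟨(hj.trans_le (Nat.find_spec h).1).le, hjc⟩

theorem measurableSet_firstExceed {m : MeasurableSpace α} {k : ℕ}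
    (hZ : ∀ j ≤ k, Measurable[m] (Z j)) : MeasurableSet[m] (firstExceed Z c k) := by
  have : firstExceed Z c k = {ω | c ≤ |Z k ω|} ∩ ⋂ j ∈ Finset.range k, {ω | |Z j ω| < c} := by
    ext; simp [firstExceed]
  rw [this]
  exact (measurableSet_le measurable_const (hZ k le_rfl).abs).inter <|
    Finset.measurableSet_biInter _ fun j hj ↦
      measurableSet_lt (hZ j (Finset.mem_range.1 hj).le).abs measurable_const

end FirstExceed

-- a first passage above `2 l` that is not followed by an increment of size `l` ends above `l`
theorem measureReal_firstExceed_le {P : Measure Ω} [IsFiniteMeasure P] {Z : ℕ → Ω → ℝ}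
    (hZ : ∀ k, Measurable (Z k)) {N k : ℕ} {l t : ℝ}
    (hindep : Indep (⨆ j ≤ k, MeasurableSpace.comap (Z j) inferInstance)
      (MeasurableSpace.comap (fun ω ↦ Z N ω - Z k ω) inferInstance) P)
    (htail : P.real {ω | l ≤ |Z N ω - Z k ω|} ≤ t) :
    P.real (firstExceed Z (2 * l) k) ≤
      t * P.real (firstExceed Z (2 * l) k) +
        P.real (firstExceed Z (2 * l) k ∩ {ω | l ≤ |Z N ω|}) := by
  set A := firstExceed Z (2 * l) k
  set U := {ω | l ≤ |Z N ω - Z k ω|}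
  have hA : MeasurableSet[⨆ j ≤ k, MeasurableSpace.comap (Z j) inferInstance] A :=
    measurableSet_firstExceed fun j hj ↦ (comap_measurable (Z j)).mono
      (le_iSup₂ (f := fun j (_ : j ≤ k) ↦ MeasurableSpace.comap (Z j) inferInstance) j hj) le_rfl
  have hU : MeasurableSet[MeasurableSpace.comap (fun ω ↦ Z N ω - Z k ω) inferInstance] U :=
    ⟨{x | l ≤ |x|}, measurableSet_le measurable_const measurable_abs, rfl⟩
  have hAU : P.real (A ∩ U) = P.real U * P.real A := by
    simp only [measureReal_def, (Indep_iff _ _ _).1 hindep _ _ hA hU, ENNReal.toReal_mul,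
      mul_comm]
  have hAV : A \ U ⊆ A ∩ {ω | l ≤ |Z N ω|} := fun ω ⟨hωA, (hωU : ¬ l ≤ |Z N ω - Z k ω|)⟩ ↦ by
    refine ⟨hωA, ?_⟩
    have := abs_sub_abs_le_abs_sub (Z k ω) (Z N ω)
    rw [abs_sub_comm] at this
    show l ≤ |Z N ω|
    linarith [hωA.1]
  have hUm : MeasurableSet U := measurableSet_le measurable_const ((hZ N).sub (hZ k)).abs
  calc P.real A = P.real (A ∩ U) + P.real (A \ U) := (measureReal_inter_add_sdiff hUm).symm
    _ ≤ t * P.real A + P.real (A ∩ {ω | l ≤ |Z N ω|}) := by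
        rw [hAU]
        exact add_le_add (mul_le_mul_of_nonneg_right htail measureReal_nonneg)
          (measureReal_mono hAV)

theorem ottaviani_ineq {P : Measure Ω} [IsFiniteMeasure P] {Z : ℕ → Ω → ℝ}
    (hZ : ∀ k, Measurable (Z k)) {N : ℕ} {l t : ℝ}
    (hindep : ∀ k ≤ N, Indep (⨆ j ≤ k, MeasurableSpace.comap (Z j) inferInstance)
      (MeasurableSpace.comap (fun ω ↦ Z N ω - Z k ω) inferInstance) P)
    (htail : ∀ k ≤ N, P.real {ω | l ≤ |Z N ω - Z k ω|} ≤ t) :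
    (1 - t) * P.real {ω | ∃ k ≤ N, 2 * l ≤ |Z k ω|} ≤ P.real {ω | l ≤ |Z N ω|} := by
  set A := firstExceed Z (2 * l)
  set V := {ω | l ≤ |Z N ω|}
  have hA : ∀ k, MeasurableSet (A k) := fun k ↦ measurableSet_firstExceed fun j _ ↦ hZ j
  have hdisj : PairwiseDisjoint (↑(Finset.Iic N)) A :=
    pairwise_disjoint_firstExceed.set_pairwise _
  have hsumV : ∑ k ∈ Finset.Iic N, P.real (A k ∩ V) ≤ P.real V := by
    rw [← measureReal_biUnion_finset (hdisj.mono fun k ↦ inter_subset_left)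
      fun k _ ↦ (hA k).inter (measurableSet_le measurable_const (hZ N).abs)]
    exact measureReal_mono (iUnion₂_subset fun k _ ↦ inter_subset_right)
  rw [← biUnion_firstExceed, measureReal_biUnion_finset hdisj fun k _ ↦ hA k, sub_mul, one_mul,
    Finset.mul_sum, sub_le_iff_le_add]
  calc ∑ k ∈ Finset.Iic N, P.real (A k)
      ≤ ∑ k ∈ Finset.Iic N, (t * P.real (A k) + P.real (A k ∩ V)) :=
        Finset.sum_le_sum fun k hk ↦ measureReal_firstExceed_le hZ
          (hindep k (Finset.mem_Iic.1 hk)) (htail k (Finset.mem_Iic.1 hk))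
    _ ≤ _ := by rw [Finset.sum_add_distrib]; linarith

theorem measurable_sub_of_measurable_succ_sub {α : Type*} {m : MeasurableSpace α}
    {F : ℕ → α → ℝ} {a b : ℕ} (hab : a ≤ b)
    (hF : ∀ i, a ≤ i → i < b → Measurable[m] fun ω ↦ F (i + 1) ω - F i ω) :
    Measurable[m] fun ω ↦ F b ω - F a ω := by
  induction b, hab using Nat.le_induction with
  | base => simp
  | succ b hab ih =>
    convert (hF b hab b.lt_succ_self).add (ih fun i hai hib ↦ hF i hai (hib.trans b.lt_succ_self))
      using 2
    simp

theorem abs_rsInt_le {g dg f : ℝ → ℝ} {c d M : ℝ} (hcd : c ≤ d)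
    (hg : ∀ x ∈ Icc c d, HasDerivAt g (dg x) x) (hdg : ContinuousOn dg (Icc c d))
    (hdg₀ : ∀ x ∈ Icc c d, 0 ≤ dg x) (hgc : 0 ≤ g c) (hfd : f d = 0)
    (hM : ∀ x ∈ Icc c d, |f x| ≤ M) :
    |rsInt g dg f c d| ≤ g d * M := by
  have hdgi : IntervalIntegrable dg volume c d := (uIcc_of_le hcd ▸ hdg).intervalIntegrable
  have hFTC : ∫ x in c..d, dg x = g d - g c :=
    intervalIntegral.integral_eq_sub_of_hasDerivAt (uIcc_of_le hcd ▸ hg) hdgi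
  have hint : |∫ x in c..d, dg x * f x| ≤ (g d - g c) * M := by
    rw [← hFTC, ← intervalIntegral.integral_mul_const, ← Real.norm_eq_abs]
    refine intervalIntegral.norm_integral_le_of_norm_le hcd (ae_of_all _ fun x hx ↦ ?_)
      (hdgi.mul_const M)
    have hx' : x ∈ Icc c d := Ioc_subset_Icc_self hx
    rw [Real.norm_eq_abs, abs_mul, abs_of_nonneg (hdg₀ x hx')]
    exact mul_le_mul_of_nonneg_left (hM x hx') (hdg₀ x hx')
  have hc : |g c * f c| ≤ g c * M := by
    rw [abs_mul, abs_of_nonneg hgc]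
    exact mul_le_mul_of_nonneg_left (hM c ⟨le_rfl, hcd⟩) hgc
  calc |rsInt g dg f c d| = |g c * f c + ∫ x in c..d, dg x * f x| := by
        rw [rsInt, hfd, mul_zero, zero_sub, sub_eq_add_neg, ← neg_add, abs_neg]
    _ ≤ g d * M := by linarith [abs_add_le (g c * f c) (∫ x in c..d, dg x * f x)]

section Kernel

variable {H s : ℝ}

theorem hasDerivAt_kf {x : ℝ} (hx : x < s) : HasDerivAt (kf H s) (kdf H s x) x := by
  show HasDerivAt (fun y ↦ (s - y) ^ (H / 2 - 1)) ((1 - H / 2) * (s - x) ^ (H / 2 - 2)) x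
  convert ((hasDerivAt_id' x).const_sub s).rpow_const (p := H / 2 - 1)
    (Or.inl (sub_pos.2 hx).ne') using 1
  rw [show H / 2 - 1 - 1 = H / 2 - 2 by ring]
  ring

theorem continuousOn_kdf : ContinuousOn (kdf H s) (Iio s) :=
  continuousOn_const.mul <| (continuousOn_const.sub continuousOn_id).rpow_const
    fun _ hx ↦ Or.inl (sub_pos.2 hx).ne'

theorem kf_le_kf (hH : H ≤ 2) {x y : ℝ} (hxy : x ≤ y) (hy : y < s) : kf H s x ≤ kf H s y :=
  Real.rpow_le_rpow_of_nonpos (sub_pos.2 hy) (by linarith) (by linarith)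

theorem kdf_le_kdf (hH : H ≤ 2) {x y : ℝ} (hxy : x ≤ y) (hy : y < s) :
    kdf H s x ≤ kdf H s y :=
  mul_le_mul_of_nonneg_left
    (Real.rpow_le_rpow_of_nonpos (sub_pos.2 hy) (by linarith) (by linarith)) (by linarith)

theorem rpow_mul_abs_rsInt_kf_sub_le (hH : H < 2) (hs : 0 ≤ s) {ε M : ℝ} (hε : 0 < ε)
    {f : ℝ → ℝ} (hf0 : f 0 = 0) (hM : ∀ x ∈ Icc (-ε) 0, |f x| ≤ M) :
    s ^ (1 - H / 2) * |rsInt (fun x ↦ kf H s x - kf H s (x - ε))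
      (fun x ↦ kdf H s x - kdf H s (x - ε)) f (-ε) 0| ≤ M := by
  have hM₀ : 0 ≤ M := (abs_nonneg _).trans (hM 0 ⟨by linarith, le_rfl⟩)
  rcases hs.eq_or_lt with rfl | hs
  · rw [Real.zero_rpow (by linarith), zero_mul]
    exact hM₀
  have hlt : ∀ x ∈ Icc (-ε) (0 : ℝ), x < s := fun x hx ↦ hx.2.trans_lt hs
  have hcont : ContinuousOn (fun x ↦ kdf H s x - kdf H s (x - ε)) (Icc (-ε) 0) :=
    (continuousOn_kdf.mono hlt).sub <| continuousOn_kdf.comp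
      (continuousOn_id.sub continuousOn_const) fun x hx ↦ by
        simp only [mem_Iio]; linarith [hlt x hx]
  have hderiv : ∀ x ∈ Icc (-ε) (0 : ℝ), HasDerivAt (fun x ↦ kf H s x - kf H s (x - ε))
      (kdf H s x - kdf H s (x - ε)) x := fun x hx ↦ (hasDerivAt_kf (hlt x hx)).sub
    (HasDerivAt.comp_sub_const x ε (hasDerivAt_kf (x := x - ε) (by linarith [hlt x hx])))
  have hrs := abs_rsInt_le (by linarith) hderiv hcont
    (fun x hx ↦ sub_nonneg.2 (kdf_le_kdf hH.le (by linarith) (hlt x hx)))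
    (sub_nonneg.2 (kf_le_kf hH.le (by linarith) (by linarith))) hf0 hM
  have hkf_shift : 0 ≤ kf H s (0 - ε) := Real.rpow_nonneg (by linarith) _
  have hone : s ^ (1 - H / 2) * kf H s 0 = 1 := by
    rw [kf, sub_zero, ← Real.rpow_add hs, show 1 - H / 2 + (H / 2 - 1) = 0 by ring,
      Real.rpow_zero]
  calc s ^ (1 - H / 2) * |rsInt _ _ f (-ε) 0|
      ≤ s ^ (1 - H / 2) * (kf H s 0 * M) := by
        gcongr
        exact hrs.trans (mul_le_mul_of_nonneg_right (by linarith) hM₀)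
    _ = M := by rw [← mul_assoc, hone, one_mul]

end Kernel

theorem abs_le_on_Icc_of_dense {f : ℝ → ℝ} (hf : Continuous f) {D : Set ℝ} (hD : Dense D)
    {a b M : ℝ} (hab : a < b) (hfD : ∀ x ∈ Ioo a b ∩ D, |f x| ≤ M) :
    ∀ x ∈ Icc a b, |f x| ≤ M := by
  have hclosed : IsClosed {x | |f x| ≤ M} := isClosed_le hf.abs continuous_const
  have hIoo : Ioo a b ⊆ {x | |f x| ≤ M} :=
    (hD.open_subset_closure_inter isOpen_Ioo).trans (closure_minimal hfD hclosed)
  rw [← closure_Ioo hab.ne]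
  exact closure_minimal hIoo hclosed

namespace IsTwoSidedBM

variable {P : Measure Ω} {B : ℝ → Ω → ℝ}

theorem indep_past_increment (hB : IsTwoSidedBM P B) {u : ℕ → ℝ} (hu : Monotone u)
    {k N : ℕ} (hkN : k ≤ N) :
    Indep (⨆ j ≤ k, MeasurableSpace.comap (fun ω ↦ B (u j) ω - B (u 0) ω) inferInstance)
      (MeasurableSpace.comap (fun ω ↦ B (u N) ω - B (u k) ω) inferInstance) P := by
  set I : Fin N → Ω → ℝ := fun i ω ↦ B (u (i + 1)) ω - B (u i) ω
  have hI : iIndepFun I P := hB.2.2.2.2 N (fun i ↦ u i) (hu.comp Fin.val_strictMono.monotone)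
  have hImeas : ∀ i, Measurable (I i) := fun i ↦ (hB.1 _).sub (hB.1 _)
  set σ : Set (Fin N) → MeasurableSpace Ω :=
    fun S ↦ ⨆ i ∈ S, MeasurableSpace.comap (I i) inferInstance
  -- `B (u b) - B (u a)` telescopes into the increments with indices in `[a, b)`
  have hsum : ∀ (S : Set (Fin N)) a b, a ≤ b → b ≤ N →
      (∀ i : Fin N, a ≤ i.val → i.val < b → i ∈ S) →
      Measurable[σ S] fun ω ↦ B (u b) ω - B (u a) ω := fun S a b hab hbN hS ↦
    measurable_sub_of_measurable_succ_sub (F := fun i ↦ B (u i)) hab fun i hai hib ↦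
      (comap_measurable (I ⟨i, hib.trans_le hbN⟩)).mono
        (le_iSup₂ (f := fun i (_ : i ∈ S) ↦ MeasurableSpace.comap (I i) inferInstance) _
          (hS _ hai hib)) le_rfl
  have hindep : Indep (σ {i | i.val < k}) (σ {i | k ≤ i.val}) P :=
    indep_iSup_of_disjoint (fun i ↦ (hImeas i).comap_le)
      ((iIndepFun_iff_iIndep _ _ _).1 hI)
      (Set.disjoint_left.2 fun i (hi : i.val < k) (hi' : k ≤ i.val) ↦ (hi.trans_le hi').false)
  refine indep_of_indep_of_le_right (indep_of_indep_of_le_left hindep ?_) ?_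
  · refine iSup₂_le fun j hj ↦ (hsum _ 0 j j.zero_le (hj.trans hkN) ?_).comap_le
    exact fun i _ hij ↦ hij.trans_le hj
  · exact (hsum _ k N hkN le_rfl fun i hki _ ↦ hki).comap_le

theorem measureReal_abs_sub_ge_le [IsFiniteMeasure P] (hB : IsTwoSidedBM P B)
    {s t ε l : ℝ} (hst : s ≤ t) (hε : t - s ≤ ε) (hl : 0 ≤ l) :
    P.real {ω | l ≤ |B t ω - B s ω|} ≤ 2 * exp (-l ^ 2 / (2 * ε)) := by
  have h := (hasSubgaussianMGF_of_map_eq_gaussianReal ((hB.1 t).sub (hB.1 s)).aemeasurable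
    (hB.2.2.2.1 s t hst) (Real.toNNReal_le_toNNReal hε)).measureReal_abs_ge_le hl
  rwa [Real.coe_toNNReal _ ((sub_nonneg.2 hst).trans hε)] at h

theorem measureReal_exists_abs_sub_ge_le_of_monotone [IsProbabilityMeasure P]
    (hB : IsTwoSidedBM P B) {u : ℕ → ℝ} (hu : Monotone u) {N : ℕ} {ε l : ℝ}
    (hε : u N - u 0 ≤ ε) (hl : 0 ≤ l) :
    P.real {ω | ∃ j ≤ N, 4 * l ≤ |B (u N) ω - B (u j) ω|} ≤ 4 * exp (-l ^ 2 / (2 * ε)) := by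
  set p := 2 * exp (-l ^ 2 / (2 * ε))
  set Z : ℕ → Ω → ℝ := fun j ω ↦ B (u j) ω - B (u 0) ω
  have hZ : ∀ j k, (fun ω ↦ Z j ω - Z k ω) = fun ω ↦ B (u j) ω - B (u k) ω := fun j k ↦ by
    funext ω; ring
  have htail : ∀ k ≤ N, P.real {ω | l ≤ |Z N ω - Z k ω|} ≤ p := fun k hk ↦ by
    simp only [Z, sub_sub_sub_cancel_right]
    exact hB.measureReal_abs_sub_ge_le (hu hk) (by linarith [hu k.zero_le]) hl
  have hott : (1 - p) * P.real {ω | ∃ k ≤ N, 2 * l ≤ |Z k ω|} ≤ P.real {ω | l ≤ |Z N ω|} :=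
    ottaviani_ineq (fun j ↦ (hB.1 _).sub (hB.1 _))
      (fun k hk ↦ hZ N k ▸ hB.indep_past_increment hu hk) htail
  have hlast : P.real {ω | l ≤ |Z N ω|} ≤ p := by
    simpa [Z] using hB.measureReal_abs_sub_ge_le (hu N.zero_le) hε hl
  -- no smallness of `p` is needed: `(1 - p) x ≤ p` and `x ≤ 1` give `x ≤ 2 p`
  have hmax : P.real {ω | ∃ k ≤ N, 2 * l ≤ |Z k ω|} ≤ 2 * p := by
    have h1 : P.real {ω | ∃ k ≤ N, 2 * l ≤ |Z k ω|} ≤ 1 := measureReal_le_one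
    have h0 : 0 ≤ P.real {ω | ∃ k ≤ N, 2 * l ≤ |Z k ω|} := measureReal_nonneg
    nlinarith
  calc P.real {ω | ∃ j ≤ N, 4 * l ≤ |B (u N) ω - B (u j) ω|}
      ≤ P.real {ω | ∃ k ≤ N, 2 * l ≤ |Z k ω|} := by
        refine measureReal_mono fun ω ⟨j, hj, hω⟩ ↦ ?_
        show ∃ k ≤ N, 2 * l ≤ |Z k ω|
        by_contra! hlt
        have h3 : B (u N) ω - B (u j) ω = Z N ω - Z j ω := by simp only [Z]; ring
        linarith [abs_sub (Z N ω) (Z j ω), h3 ▸ hω, hlt N le_rfl, hlt j hj]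
    _ ≤ 2 * p := hmax
    _ = 4 * exp (-l ^ 2 / (2 * ε)) := by ring

theorem measureReal_exists_mem_finset_abs_sub_ge_le [IsProbabilityMeasure P]
    (hB : IsTwoSidedBM P B) {t ε l : ℝ} (hε : 0 ≤ ε) (hl : 0 ≤ l) (F : Finset ℝ)
    (hF : ↑F ⊆ Icc (t - ε) t) :
    P.real {ω | ∃ x ∈ F, 4 * l ≤ |B t ω - B x ω|} ≤ 4 * exp (-l ^ 2 / (2 * ε)) := by
  set e := F.orderEmbOfFin rfl
  set u : ℕ → ℝ := fun m ↦ if h : m < F.card then e ⟨m, h⟩ else t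
  have heF : ∀ i, e i ∈ Icc (t - ε) t := fun i ↦ hF (F.orderEmbOfFin_mem rfl i)
  have hu : Monotone u := by
    intro m m' hm
    simp only [u]
    split_ifs with h h' h'
    · exact e.monotone (Fin.mk_le_mk.2 hm)
    · exact (heF _).2
    · exact absurd (hm.trans_lt h') h
    · exact le_rfl
  have huN : u F.card = t := dif_neg (lt_irrefl _)
  have hu0 : t - ε ≤ u 0 := by
    simp only [u]
    split_ifs
    · exact (heF _).1
    · linarith
  refine le_trans (measureReal_mono fun ω ⟨x, hx, hω⟩ ↦ ?_)
    (huN ▸ hB.measureReal_exists_abs_sub_ge_le_of_monotone hu (by linarith) hl)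
  obtain ⟨i, rfl⟩ : x ∈ Set.range e := by rwa [Finset.range_orderEmbOfFin]
  exact ⟨i, i.2.le, by simpa [u, huN, i.2] using hω⟩

theorem measureReal_exists_mem_abs_sub_ge_le [IsProbabilityMeasure P]
    (hB : IsTwoSidedBM P B) {t ε l : ℝ} (hε : 0 ≤ ε) (hl : 0 ≤ l) {D : Set ℝ}
    (hD : D.Countable) (hDt : D ⊆ Icc (t - ε) t) :
    P.real {ω | ∃ x ∈ D, 4 * l ≤ |B t ω - B x ω|} ≤ 4 * exp (-l ^ 2 / (2 * ε)) := by
  have := hD.to_subtype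
  set E : Finset D → Set Ω := fun F ↦ {ω | ∃ x ∈ F, 4 * l ≤ |B t ω - B x ω|}
  have hE : Monotone E := fun F G hFG ω ⟨x, hx, hω⟩ ↦ ⟨x, hFG hx, hω⟩
  have hunion : {ω | ∃ x ∈ D, 4 * l ≤ |B t ω - B x ω|} = ⋃ F, E F := by
    ext ω
    simp only [mem_iUnion]
    exact ⟨fun ⟨x, hx, hω⟩ ↦ ⟨{⟨x, hx⟩}, ⟨x, hx⟩, Finset.mem_singleton_self _, hω⟩,
      fun ⟨_, x, _, hω⟩ ↦ ⟨x, x.2, hω⟩⟩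
  have hEF : ∀ F, P.real (E F) ≤ 4 * exp (-l ^ 2 / (2 * ε)) := fun F ↦ by
    refine le_trans ?_
      (hB.measureReal_exists_mem_finset_abs_sub_ge_le (t := t) hε hl (F.map (.subtype _)) ?_)
    · exact measureReal_mono fun ω ⟨x, hx, hω⟩ ↦ ⟨x, Finset.mem_map_of_mem _ hx, hω⟩
    · rw [Finset.coe_map, Function.Embedding.coe_subtype]
      exact image_subset_iff.2 fun x _ ↦ hDt x.2
  rw [hunion, measureReal_def, hE.measure_iUnion]
  exact ENNReal.toReal_le_of_le_ofReal (by positivity) <| iSup_le fun F ↦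
    (ENNReal.le_ofReal_iff_toReal_le (measure_ne_top P _) (by positivity)).2 (hEF F)

theorem measureReal_iSup_rpow_mul_abs_rsInt_gt_le [IsProbabilityMeasure P]
    (hB : IsTwoSidedBM P B) {H T ε α : ℝ} (hH : H < 2) (hε : 0 < ε) (hα : 0 ≤ α) :
    P.real {ω | α < ⨆ s ∈ Icc (0 : ℝ) T, s ^ (1 - H / 2) *
        |rsInt (fun x ↦ kf H s x - kf H s (x - ε)) (fun x ↦ kdf H s x - kdf H s (x - ε))
          (fun x ↦ B x ω) (-ε) 0|} ≤ 4 * exp (-α ^ 2 / (32 * ε)) := by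
  set D := Ioo (-ε) 0 ∩ range ((↑) : ℚ → ℝ)
  set bad := {ω | ¬ (B 0 ω = 0 ∧ Continuous fun t ↦ B t ω)}
  have hbad : P.real bad = 0 := by
    rw [measureReal_eq_zero_iff, ← ae_iff]
    exact hB.2.1.and hB.2.2.1
  have hsub : {ω | α < ⨆ s ∈ Icc (0 : ℝ) T, s ^ (1 - H / 2) *
        |rsInt (fun x ↦ kf H s x - kf H s (x - ε)) (fun x ↦ kdf H s x - kdf H s (x - ε))
          (fun x ↦ B x ω) (-ε) 0|} ⊆ {ω | ∃ x ∈ D, 4 * (α / 4) ≤ |B 0 ω - B x ω|} ∪ bad := by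
    intro ω hω
    by_cases hgood : B 0 ω = 0 ∧ Continuous fun t ↦ B t ω
    swap
    · exact Or.inr hgood
    obtain ⟨hB0, hcont⟩ := hgood
    refine Or.inl ?_
    show ∃ x ∈ D, 4 * (α / 4) ≤ |B 0 ω - B x ω|
    by_contra! hsmall
    have hM := abs_le_on_Icc_of_dense hcont Rat.denseRange_cast (by linarith : -ε < 0)
      fun x hx ↦ by simpa [hB0, mul_div_cancel₀] using (hsmall x hx).le
    refine (lt_irrefl α (hω.trans_le ?_))
    exact Real.iSup_le (fun s ↦ Real.iSup_le (fun hs ↦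
      rpow_mul_abs_rsInt_kf_sub_le hH hs.1 hε hB0 hM) hα) hα
  calc _ ≤ P.real {ω | ∃ x ∈ D, 4 * (α / 4) ≤ |B 0 ω - B x ω|} + P.real bad :=
        (measureReal_mono hsub).trans (measureReal_union_le _ _)
    _ ≤ 4 * exp (-(α / 4) ^ 2 / (2 * ε)) := by
        rw [hbad, add_zero]
        refine hB.measureReal_exists_mem_abs_sub_ge_le hε.le (by positivity)
          ((countable_range _).mono inter_subset_right) ?_
        simpa using inter_subset_left.trans Ioo_subset_Icc_self
    _ = 4 * exp (-α ^ 2 / (32 * ε)) := by ring_nf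

end IsTwoSidedBM

theorem isLittleO_exp_neg_mul_rpow_natCast {δ b : ℝ} (hδ : 0 < δ) (hb : 0 < b) (q : ℝ) :
    (fun n : ℕ ↦ exp (-b * (n : ℝ) ^ δ)) =o[atTop] fun n : ℕ ↦ (n : ℝ) ^ (-q) := by
  have h := (isLittleO_exp_neg_mul_rpow_atTop hb (-q / δ)).comp_tendsto
    ((tendsto_rpow_atTop hδ).comp tendsto_natCast_atTop_atTop)
  refine h.congr_right fun n ↦ ?_
  simp only [Function.comp_apply, ← Real.rpow_mul n.cast_nonneg]
  rw [mul_div_cancel₀ _ hδ.ne']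

theorem alphaRate_sq_div_epsSeq (H β : ℝ) {n : ℕ} (hn : 0 < n) :
    alphaRate β n ^ 2 / epsSeq H β n =
      (n : ℝ) ^ (β / (1 - H / 2) - (1 - 2 * β)) * Real.log n ^ (5 : ℝ) := by
  have hn' : (0 : ℝ) < n := Nat.cast_pos.2 hn
  have hlog : 0 ≤ Real.log n := Real.log_natCast_nonneg n
  rw [alphaRate, epsSeq, mul_pow, ← Real.rpow_natCast, ← Real.rpow_natCast (Real.log n ^ _),
    ← Real.rpow_mul hn'.le, ← Real.rpow_mul hlog, mul_div_right_comm, ← Real.rpow_sub hn']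
  congr 2 <;> push_cast <;> ring

theorem rpow_le_alphaRate_sq_div_epsSeq (H β : ℝ) {n : ℕ} (hn : 3 ≤ n) :
    (n : ℝ) ^ (β / (1 - H / 2) - (1 - 2 * β)) ≤ alphaRate β n ^ 2 / epsSeq H β n := by
  have hn' : (3 : ℝ) ≤ n := by exact_mod_cast hn
  have hlog : 1 ≤ Real.log n := by
    rw [Real.le_log_iff_exp_le (by linarith)]
    linarith [Real.exp_one_lt_d9]
  rw [alphaRate_sq_div_epsSeq H β (by omega)]
  exact le_mul_of_one_le_right (by positivity) (Real.one_le_rpow hlog (by norm_num))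

theorem rate_exponent_pos {H β : ℝ} (hH : 0 ≤ H) (hH' : H < 3 / 2)
    (hβ : (1 - H / 2) / (3 - 2 * H) < β) : 0 < β / (1 - H / 2) - (1 - 2 * β) := by
  have h := (div_lt_iff₀ (by linarith : (0 : ℝ) < 3 - 2 * H)).1 hβ
  rw [sub_pos, lt_div_iff₀ (by linarith)]
  nlinarith

theorem lemma_G1_general
    (P : Measure Ω) [IsProbabilityMeasure P]
    (H T β : ℝ) (hH : 1 / 2 < H) (hH' : H < 1)
    (hβl : (1 - H / 2) / (3 - 2 * H) < β)
    (B : ℝ → Ω → ℝ) (hB : IsTwoSidedBM P B) :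
    ∀ q : ℝ, 0 < q → ∃ C : ℝ, 0 < C ∧
      (fun n : ℕ => (P {ω | C * alphaRate β n <
          ⨆ s ∈ Icc (0 : ℝ) T, s ^ (1 - H / 2) *
            |rsInt (fun x => kf H s x - kf H s (x - epsSeq H β n))
              (fun x => kdf H s x - kdf H s (x - epsSeq H β n))
              (fun x => B x ω) (-(epsSeq H β n)) 0|}).toReal)
      =o[atTop] fun n : ℕ => (n : ℝ) ^ (-q) := by
  intro q _
  refine ⟨1, one_pos, ?_⟩
  refine IsBigO.trans_isLittleO (IsBigO.of_bound 4 ?_) (isLittleO_exp_neg_mul_rpow_natCast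
    (rate_exponent_pos (by linarith) (by linarith) hβl) (by norm_num : (0 : ℝ) < 1 / 32) q)
  filter_upwards [eventually_ge_atTop 3] with n hn
  have hε : 0 < epsSeq H β n := Real.rpow_pos_of_pos (Nat.cast_pos.2 (by omega)) _
  have hα : 0 ≤ 1 * alphaRate β n := by rw [one_mul, alphaRate]; positivity
  rw [Real.norm_of_nonneg ENNReal.toReal_nonneg, Real.norm_of_nonneg (exp_pos _).le]
  calc _ ≤ 4 * exp (-(1 * alphaRate β n) ^ 2 / (32 * epsSeq H β n)) :=
        hB.measureReal_iSup_rpow_mul_abs_rsInt_gt_le (by linarith) hε hα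
    _ = 4 * exp (-(1 / 32) * (alphaRate β n ^ 2 / epsSeq H β n)) := by field_simp
    _ ≤ 4 * exp (-(1 / 32) * (n : ℝ) ^ (β / (1 - H / 2) - (1 - 2 * β))) := by
        gcongr 4 * exp ?_
        linarith [rpow_le_alphaRate_sq_div_epsSeq H β hn]

/-- Lemma G1. -/
theorem lemma_G1
    (P : Measure Ω) [IsProbabilityMeasure P]
    (H T a β : ℝ) (hH : 1 / 2 < H) (hH' : H < 1) (hT : 0 < T) (ha : a < 0)
    (hβl : (1 - H / 2) / (3 - 2 * H) < β) (hβr : β < 1 / 2)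
    (B : ℝ → Ω → ℝ) (hB : IsTwoSidedBM P B) :
    ∀ q : ℝ, 0 < q → ∃ C : ℝ, 0 < C ∧
      (fun n : ℕ => (P {ω | C * alphaRate β n <
          ⨆ s ∈ Icc (0 : ℝ) T, s ^ (1 - H / 2) *
            |rsInt (fun x => kf H s x - kf H s (x - epsSeq H β n))
              (fun x => kdf H s x - kdf H s (x - epsSeq H β n))
              (fun x => B x ω) (-(epsSeq H β n)) 0|}).toReal)
      =o[atTop] fun n : ℕ => (n : ℝ) ^ (-q) :=
  lemma_G1_general P H T β hH hH' hβl B hB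
end
end

section
/- There exists a constant C > 0 depending only on H and T such that for every ε with 0 < ε ≤ T: ∫_0^{T−ε} ( ∫_0^{x₁} ( ∫_{x₁}^{x₁+ε} (s−x₁)^{H/2−1}(s−x₂)^{H/2−1} ds )² dx₂ ) dx₁ ≤ C ε^{2H−1}. -/
/- Formalization of results from "A strong convergence to the Rosenblatt process"
by J. Garzón, S. Torres and C.A. Tudor.

Conventions used throughout:
* Brownian motions are encoded by the predicates `IsTwoSidedBM` / `IsBM` below.
* Wiener integrals of `C¹` deterministic integrands and pathwise Riemann–Stieltjes
  integrals against the (piecewise linear) transport processes are both encoded via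
  the integration-by-parts formula (`rsInt`), with which they coincide (a.s. in the
  Wiener case).
* Double Wiener–Itô integrals (the processes `X^{2,H}`, `X^{3,H}` and the Rosenblatt
  process itself) are characterized as `L²(P)`-limits of their natural
  `ε`-regularizations, in which the singular kernel `(s-x)^{H/2-1}` is replaced by
  `(s+ε-x)^{H/2-1}` and the diagonal trace term is subtracted. -/

open MeasureTheory ProbabilityTheory Real Filter Set Asymptotics
open scoped ENNReal NNReal

noncomputable section

variable {Ω : Type*} [MeasurableSpace Ω]

/-! The inner integral depends only on `d = x₁ - x₂`. Since `(s - x₂)^(b+c) ≤ (s - x₁)^b d^c`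
for `b, c ≤ 0`, it is at most a multiple of `ε^(H/2) d^(H/2-1)` (take `b = 0`), whose square
is integrable at `d = ∞`, and of `ε^(H/2-1/4) d^(H/2-3/4)` (take `b = -1/4`), whose square is
integrable at `d = 0` because `H > 1/2`. Using the second bound for `d ≤ ε` and the first for
`d > ε`, the `x₂`-integral is bounded, uniformly in `x₁`, by the integral over `(0, ∞)` of a
broken power law, which is a constant times `ε^(2H-1)`. -/

theorem rpow_add_le_mul_rpow_of_nonpos {x y b c : ℝ} (hx : 0 < x) (hy : 0 < y) (hb : b ≤ 0)
    (hc : c ≤ 0) : (x + y) ^ (b + c) ≤ x ^ b * y ^ c := by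
  rw [rpow_add (by linarith)]
  exact mul_le_mul (rpow_le_rpow_of_nonpos hx (by linarith) hb)
    (rpow_le_rpow_of_nonpos hy (by linarith) hc) (by positivity) (by positivity)

theorem integral_sub_rpow {r : ℝ} (hr : -1 < r) (x ε : ℝ) :
    ∫ s in x..x + ε, (s - x) ^ r = ε ^ (r + 1) / (r + 1) := by
  rw [intervalIntegral.integral_comp_sub_right (fun s => s ^ r), sub_self, add_sub_cancel_left,
    integral_rpow (Or.inl hr), zero_rpow (by linarith), sub_zero]

theorem integral_sub_rpow_mul_sub_rpow_le {a b c e x₁ x₂ ε : ℝ} (hb : b ≤ 0) (hc : c ≤ 0)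
    (hbc : b + c = e) (hab : -1 < a + b) (hx : x₂ < x₁) (hε : 0 ≤ ε) :
    ∫ s in x₁..x₁ + ε, (s - x₁) ^ a * (s - x₂) ^ e
      ≤ ε ^ (a + b + 1) / (a + b + 1) * (x₁ - x₂) ^ c := by
  have hle : x₁ ≤ x₁ + ε := by linarith
  have hint : IntegrableOn (fun s => (s - x₁) ^ (a + b) * (x₁ - x₂) ^ c) (Ioc x₁ (x₁ + ε)) := by
    rw [← intervalIntegrable_iff_integrableOn_Ioc_of_le hle]
    have h := ((intervalIntegral.intervalIntegrable_rpow' (a := 0) (b := ε) hab).comp_sub_right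
      x₁).mul_const ((x₁ - x₂) ^ c)
    rwa [zero_add, add_comm ε] at h
  calc ∫ s in x₁..x₁ + ε, (s - x₁) ^ a * (s - x₂) ^ e
      ≤ ∫ s in x₁..x₁ + ε, (s - x₁) ^ (a + b) * (x₁ - x₂) ^ c := by
        rw [intervalIntegral.integral_of_le hle, intervalIntegral.integral_of_le hle]
        refine integral_mono_of_nonneg ?_ hint ?_
        · filter_upwards [ae_restrict_mem measurableSet_Ioc] with s hs
          exact mul_nonneg (rpow_nonneg (by linarith [hs.1]) _)
            (rpow_nonneg (by linarith [hs.1]) _)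
        · filter_upwards [ae_restrict_mem measurableSet_Ioc] with s hs
          have hs₁ : 0 < s - x₁ := by linarith [hs.1]
          calc (s - x₁) ^ a * (s - x₂) ^ e
              = (s - x₁) ^ a * ((s - x₁) + (x₁ - x₂)) ^ (b + c) := by rw [hbc]; ring_nf
            _ ≤ (s - x₁) ^ a * ((s - x₁) ^ b * (x₁ - x₂) ^ c) := by
                gcongr
                exact rpow_add_le_mul_rpow_of_nonpos hs₁ (by linarith) hb hc
            _ = (s - x₁) ^ (a + b) * (x₁ - x₂) ^ c := by rw [rpow_add hs₁]; ring
    _ = ε ^ (a + b + 1) / (a + b + 1) * (x₁ - x₂) ^ c := by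
        rw [intervalIntegral.integral_mul_const, integral_sub_rpow hab x₁ ε]

def brokenPowerLaw (A p B q ε d : ℝ) : ℝ :=
  (Ioc 0 ε).indicator (fun d => A * d ^ p) d + (Ioi ε).indicator (fun d => B * d ^ q) d

section brokenPowerLaw

variable {A p B q ε : ℝ}

theorem brokenPowerLaw_nonneg (hA : 0 ≤ A) (hB : 0 ≤ B) (hε : 0 ≤ ε) (d : ℝ) :
    0 ≤ brokenPowerLaw A p B q ε d := by
  refine add_nonneg (indicator_nonneg (fun d hd => ?_) d) (indicator_nonneg (fun d hd => ?_) d)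
  · exact mul_nonneg hA (rpow_nonneg hd.1.le p)
  · exact mul_nonneg hB (rpow_nonneg (hε.trans (le_of_lt hd)) q)

theorem integrable_brokenPowerLaw (hp : -1 < p) (hq : q < -1) (hε : 0 < ε) :
    Integrable (brokenPowerLaw A p B q ε) :=
  (IntegrableOn.integrable_indicator
      ((intervalIntegral.intervalIntegrable_rpow' hp).1.const_mul A) measurableSet_Ioc).add
    (IntegrableOn.integrable_indicator
      ((integrableOn_Ioi_rpow_of_lt hq hε).const_mul B) measurableSet_Ioi)

theorem integral_brokenPowerLaw (hp : -1 < p) (hq : q < -1) (hε : 0 < ε) :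
    ∫ d, brokenPowerLaw A p B q ε d
      = A * (ε ^ (p + 1) / (p + 1)) - B * (ε ^ (q + 1) / (q + 1)) := by
  simp only [brokenPowerLaw]
  rw [integral_add
    (IntegrableOn.integrable_indicator
      ((intervalIntegral.intervalIntegrable_rpow' hp).1.const_mul A) measurableSet_Ioc)
    (IntegrableOn.integrable_indicator
      ((integrableOn_Ioi_rpow_of_lt hq hε).const_mul B) measurableSet_Ioi),
    integral_indicator measurableSet_Ioc, integral_indicator measurableSet_Ioi,
    integral_const_mul, integral_const_mul, ← intervalIntegral.integral_of_le hε.le,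
    integral_rpow (Or.inl hp), integral_Ioi_rpow_of_lt hq hε, zero_rpow (by linarith)]
  rw [sub_zero, neg_div, mul_neg, sub_eq_add_neg]

end brokenPowerLaw

theorem sq_integral_kernel_le_brokenPowerLaw {H x₁ x₂ ε : ℝ} (hH : 1 / 2 < H) (hH' : H < 1)
    (hx : x₂ < x₁) (hε : 0 < ε) :
    (∫ s in x₁..x₁ + ε, (s - x₁) ^ (H / 2 - 1) * (s - x₂) ^ (H / 2 - 1)) ^ 2
      ≤ brokenPowerLaw (ε ^ (H - 1 / 2) / (H / 2 - 1 / 4) ^ 2) (H - 3 / 2)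
          (ε ^ H / (H / 2) ^ 2) (H - 2) ε (x₁ - x₂) := by
  have hd : 0 < x₁ - x₂ := by linarith
  have hK : 0 ≤ ∫ s in x₁..x₁ + ε, (s - x₁) ^ (H / 2 - 1) * (s - x₂) ^ (H / 2 - 1) :=
    intervalIntegral.integral_nonneg (by linarith) fun s hs =>
      mul_nonneg (rpow_nonneg (by linarith [hs.1]) _) (rpow_nonneg (by linarith [hs.1]) _)
  rcases le_or_gt (x₁ - x₂) ε with hdε | hdε
  · rw [brokenPowerLaw, indicator_of_mem (show x₁ - x₂ ∈ Ioc 0 ε from ⟨hd, hdε⟩),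
      indicator_of_notMem (show x₁ - x₂ ∉ Ioi ε from not_lt.2 hdε), add_zero]
    have h := integral_sub_rpow_mul_sub_rpow_le (a := H / 2 - 1) (e := H / 2 - 1)
      (b := -1 / 4) (c := H / 2 - 3 / 4) (by norm_num) (by linarith) (by ring) (by linarith)
      hx hε.le
    rw [show H / 2 - 1 + -1 / 4 + 1 = H / 2 - 1 / 4 by ring] at h
    calc _ ≤ (ε ^ (H / 2 - 1 / 4) / (H / 2 - 1 / 4) * (x₁ - x₂) ^ (H / 2 - 3 / 4)) ^ 2 :=
          pow_le_pow_left₀ hK h 2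
      _ = _ := by
          rw [mul_pow, div_pow, ← rpow_mul_natCast hε.le, ← rpow_mul_natCast hd.le]
          ring_nf
  · rw [brokenPowerLaw, indicator_of_notMem (fun h => (not_lt.2 h.2) hdε),
      indicator_of_mem (show x₁ - x₂ ∈ Ioi ε from hdε), zero_add]
    have h := integral_sub_rpow_mul_sub_rpow_le (a := H / 2 - 1) (b := 0) (c := H / 2 - 1)
      le_rfl (by linarith) (zero_add _) (by linarith) hx hε.le
    rw [add_zero, sub_add_cancel] at h
    calc _ ≤ (ε ^ (H / 2) / (H / 2) * (x₁ - x₂) ^ (H / 2 - 1)) ^ 2 := pow_le_pow_left₀ hK h 2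
      _ = _ := by
          rw [mul_pow, div_pow, ← rpow_mul_natCast hε.le, ← rpow_mul_natCast hd.le]
          ring_nf

theorem intervalIntegral_le_integral_of_le_comp_sub {f g : ℝ → ℝ} {x : ℝ} (hx : 0 ≤ x)
    (hf : ∀ y, 0 ≤ f y) (hg : Integrable g) (hg_nonneg : ∀ d, 0 ≤ g d)
    (hfg : ∀ y ∈ Ioo 0 x, f y ≤ g (x - y)) :
    ∫ y in 0..x, f y ≤ ∫ d, g d :=
  calc ∫ y in 0..x, f y = ∫ y in Ioo 0 x, f y := by
        rw [intervalIntegral.integral_of_le hx, integral_Ioc_eq_integral_Ioo]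
    _ ≤ ∫ y in Ioo 0 x, g (x - y) :=
        integral_mono_of_nonneg (ae_of_all _ hf) (hg.comp_sub_left x).integrableOn
          ((ae_restrict_iff' measurableSet_Ioo).2 (ae_of_all _ hfg))
    _ ≤ ∫ y, g (x - y) :=
        setIntegral_le_integral (hg.comp_sub_left x) (ae_of_all _ fun _ => hg_nonneg _)
    _ = ∫ d, g d := integral_sub_left_eq_self g volume x

theorem integral_sq_integral_kernel_le {H x₁ ε : ℝ} (hH : 1 / 2 < H) (hH' : H < 1)
    (hx₁ : 0 ≤ x₁) (hε : 0 < ε) :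
    ∫ x₂ in 0..x₁, (∫ s in x₁..x₁ + ε, (s - x₁) ^ (H / 2 - 1) * (s - x₂) ^ (H / 2 - 1)) ^ 2
      ≤ (1 / ((H / 2 - 1 / 4) ^ 2 * (H - 1 / 2)) + 1 / ((H / 2) ^ 2 * (1 - H)))
          * ε ^ (2 * H - 1) := by
  refine (intervalIntegral_le_integral_of_le_comp_sub hx₁ (fun _ => sq_nonneg _)
    (integrable_brokenPowerLaw (by linarith) (by linarith) hε)
    (brokenPowerLaw_nonneg (by positivity) (by positivity) hε.le)
    fun x₂ hx₂ => sq_integral_kernel_le_brokenPowerLaw hH hH' hx₂.2 hε).trans_eq ?_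
  have h₁ : ε ^ (H - 1 / 2) * ε ^ (H - 1 / 2) = ε ^ (2 * H - 1) := by
    rw [← rpow_add hε]; ring_nf
  have h₂ : ε ^ H * ε ^ (H - 1) = ε ^ (2 * H - 1) := by
    rw [← rpow_add hε]; ring_nf
  have : H - 1 ≠ 0 := by linarith
  have : 1 - H ≠ 0 := by linarith
  have : H - 1 / 2 ≠ 0 := by linarith
  have : H ≠ 0 := by linarith
  rw [integral_brokenPowerLaw (by linarith) (by linarith) hε,
    show H - 3 / 2 + 1 = H - 1 / 2 by ring, show H - 2 + 1 = H - 1 by ring, add_mul]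
  nth_rw 1 [← h₁]
  rw [← h₂]
  field_simp
  ring

/-- key kernel estimate in the proof of Proposition 4. -/
theorem kernel_square_estimate
    (H T : ℝ) (hH : 1 / 2 < H) (hH' : H < 1) (hT : 0 < T) :
    ∃ C : ℝ, 0 < C ∧ ∀ ε : ℝ, 0 < ε → ε ≤ T →
      (∫ x₁ in (0 : ℝ)..(T - ε), ∫ x₂ in (0 : ℝ)..x₁,
        (∫ s in x₁..(x₁ + ε),
          (s - x₁) ^ (H / 2 - 1) * (s - x₂) ^ (H / 2 - 1)) ^ 2)
      ≤ C * ε ^ (2 * H - 1) := by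
  set C := 1 / ((H / 2 - 1 / 4) ^ 2 * (H - 1 / 2)) + 1 / ((H / 2) ^ 2 * (1 - H))
  have hC : 0 < C := by
    have : 0 < H - 1 / 2 := by linarith
    have : 0 < 1 - H := by linarith
    positivity
  refine ⟨T * C, mul_pos hT hC, fun ε hε hεT => ?_⟩
  have hinner : ∀ x₁ ∈ uIoc 0 (T - ε), ‖∫ x₂ in (0 : ℝ)..x₁,
      (∫ s in x₁..(x₁ + ε), (s - x₁) ^ (H / 2 - 1) * (s - x₂) ^ (H / 2 - 1)) ^ 2‖
        ≤ C * ε ^ (2 * H - 1) := by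
    intro x₁ hx₁
    rw [uIoc_of_le (by linarith)] at hx₁
    rw [Real.norm_of_nonneg (intervalIntegral.integral_nonneg hx₁.1.le fun _ _ => sq_nonneg _)]
    exact integral_sq_integral_kernel_le hH hH' hx₁.1.le hε
  calc _ ≤ C * ε ^ (2 * H - 1) * |T - ε - 0| :=
        (le_norm_self _).trans (intervalIntegral.norm_integral_le_of_norm_le_const hinner)
    _ ≤ T * C * ε ^ (2 * H - 1) := by
        rw [sub_zero, abs_of_nonneg (by linarith)]
        nlinarith [mul_nonneg hC.le (rpow_nonneg hε.le (2 * H - 1))]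
end
end
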